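/- Let d ≥ 1 and N ∈ ℕ. For every y ∈ ℝ^{d+1} and every α ∈ ℕ^{d+1} with |α| ≤ N, Σ_{γ ∈ ℕ^{d+1}, |γ| = N} (N!/γ!) (−γ)_α y^γ = (−N)_{|α|} · (y_1+⋯+y_{d+1})^{N−|α|} · y^α. -/

import Mathlib

open Finset

/-- Pochhammer symbol `(a)_k = a (a+1) ⋯ (a+k-1)`. -/
noncomputable def poch (a : ℝ) : ℕ → ℝ
  | 0 => 1
  | k + 1 => poch a k * (a + k)

/-- Multi-index Pochhammer `(x)_γ = ∏ i (x i)_{γ i}`. -/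
noncomputable def pochV {m : ℕ} (x : Fin m → ℝ) (γ : Fin m → ℕ) : ℝ :=
  ∏ i, poch (x i) (γ i)

/-- Multi-index factorial `γ! = ∏ i (γ i)!` (as a real number). -/
noncomputable def mfact {m : ℕ} (γ : Fin m → ℕ) : ℝ :=
  ∏ i, (Nat.factorial (γ i) : ℝ)

/-- Shifted monomial `m_γ(x) = (-1)^{|γ|} (-x)_γ`. -/
noncomputable def mono {m : ℕ} (γ : Fin m → ℕ) (x : Fin m → ℝ) : ℝ :=
  (-1 : ℝ) ^ (∑ i, γ i) * pochV (fun i => -(x i)) γ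

/-- `Z_N^{d+1} = {α ∈ ℕ^{d+1} : |α| = N}` as a finite set. -/
def ZN (d N : ℕ) : Finset (Fin (d + 1) → ℕ) :=
  (Fintype.piFinset fun _ => Finset.range (N + 1)).filter fun α => ∑ i, α i = N

/-- `{ν ∈ ℕ^d : |ν| = n}` as a finite set. -/
def idxSet (d n : ℕ) : Finset (Fin d → ℕ) :=
  (Fintype.piFinset fun _ => Finset.range (n + 1)).filter fun ν => ∑ i, ν i = n

/-- The finite set `{γ ∈ ℕ^m : γ ≤ α}`. -/
def below {m : ℕ} (α : Fin m → ℕ) : Finset (Fin m → ℕ) :=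
  Fintype.piFinset fun i => Finset.range (α i + 1)

/-- Monic Hahn polynomial `Q_α(x; κ, N)`. -/
noncomputable def monicQ (d N : ℕ) (κ : Fin (d + 1) → ℝ) (α : Fin (d + 1) → ℕ)
    (x : Fin (d + 1) → ℝ) : ℝ :=
  poch (-(N : ℝ)) (∑ i, α i) * pochV (fun i => κ i + 1) α /
      poch ((∑ i, κ i) + d + (∑ i, α i)) (∑ i, α i) *
    ∑ γ ∈ below α,
      pochV (fun i => -(α i : ℝ)) γ * poch ((∑ i, κ i) + d + (∑ i, α i)) (∑ i, γ i) *
          (-1 : ℝ) ^ (∑ i, γ i) /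
          (mfact γ * pochV (fun i => κ i + 1) γ * poch (-(N : ℝ)) (∑ i, γ i)) *
        mono γ x

/-- One-variable Hahn polynomial `Q_n(x; a, b, M)` (a `₃F₂` sum). -/
noncomputable def hahn1 (n : ℕ) (x a b M : ℝ) : ℝ :=
  ∑ k ∈ Finset.range (n + 1),
    poch (-(n : ℝ)) k * poch ((n : ℝ) + a + b + 1) k * poch (-x) k /
      (poch (a + 1) k * poch (-M) k * (Nat.factorial k : ℝ))

/-- The parameter `a_j = κ_{j+1}+⋯+κ_{d+1} + 2|ν^{j+1}| + d - j` (1-based `j`). -/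
noncomputable def aj (d : ℕ) (κ : Fin (d + 1) → ℝ) (ν : Fin d → ℕ) (j : Fin d) : ℝ :=
  (∑ i ∈ Finset.univ.filter (fun i : Fin (d + 1) => (j : ℕ) < (i : ℕ)), κ i) +
    2 * (∑ i ∈ Finset.univ.filter (fun i : Fin d => (j : ℕ) < (i : ℕ)), (ν i : ℝ)) +
    ((d - 1 - (j : ℕ) : ℕ) : ℝ)

/-- `|x_{j-1}| = x_1 + ⋯ + x_{j-1}` (1-based `j`). -/
noncomputable def sumLt (d : ℕ) (x : Fin (d + 1) → ℕ) (j : Fin d) : ℝ :=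
  ∑ i ∈ Finset.univ.filter (fun i : Fin (d + 1) => (i : ℕ) < (j : ℕ)), (x i : ℝ)

/-- `|ν^{j+1}| = ν_{j+1} + ⋯ + ν_d` (1-based `j`). -/
noncomputable def sumGt (d : ℕ) (ν : Fin d → ℕ) (j : Fin d) : ℝ :=
  ∑ i ∈ Finset.univ.filter (fun i : Fin d => (j : ℕ) < (i : ℕ)), (ν i : ℝ)

/-- Hahn polynomial of `d` variables `H_ν(x; κ, N)`. -/
noncomputable def hahnH (d N : ℕ) (κ : Fin (d + 1) → ℝ) (ν : Fin d → ℕ)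
    (x : Fin (d + 1) → ℕ) : ℝ :=
  (-1 : ℝ) ^ (∑ i, ν i) / poch (-(N : ℝ)) (∑ i, ν i) *
    ∏ j : Fin d,
      poch (κ j.castSucc + 1) (ν j) / poch (aj d κ ν j + 1) (ν j) *
        poch (-(N : ℝ) + sumLt d x j + sumGt d ν j) (ν j) *
        hahn1 (ν j) (x j.castSucc : ℝ) (κ j.castSucc) (aj d κ ν j)
          ((N : ℝ) - sumLt d x j - sumGt d ν j)

/-- Squared norm `B_ν(κ, N)` of the Hahn polynomial `H_ν(·; κ, N)`. -/
noncomputable def Bnorm (d N : ℕ) (κ : Fin (d + 1) → ℝ) (ν : Fin d → ℕ) : ℝ :=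
  (-1 : ℝ) ^ (∑ i, ν i) * poch ((∑ i, κ i) + d + 1) (N + ∑ i, ν i) /
      (poch (-(N : ℝ)) (∑ i, ν i) * poch ((∑ i, κ i) + d + 1) N *
        poch ((∑ i, κ i) + d + 1) (2 * ∑ i, ν i)) *
    ∏ j : Fin d,
      poch (κ j.castSucc + aj d κ ν j + 1) (2 * ν j) * poch (κ j.castSucc + 1) (ν j) *
          (Nat.factorial (ν j) : ℝ) /
        (poch (κ j.castSucc + aj d κ ν j + 1) (ν j) * poch (aj d κ ν j + 1) (ν j))

/-- Projection `Q_{α,n}(x; κ, N)` of `m_α/(κ+1)_α` onto the space of degree `n`. -/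
noncomputable def monicQn (d N : ℕ) (κ : Fin (d + 1) → ℝ) (α : Fin (d + 1) → ℕ) (n : ℕ)
    (x : Fin (d + 1) → ℝ) : ℝ :=
  (-1 : ℝ) ^ (∑ i, α i) * poch (-(N : ℝ)) (∑ i, α i) * poch ((∑ i, κ i) + d + 1) (2 * n) /
      (poch (-(N : ℝ)) n * poch ((∑ i, κ i) + d + 1) ((∑ i, α i) + n)) *
    ∑ β ∈ ZN d n,
      pochV (fun i => -(α i : ℝ)) β / (mfact β * pochV (fun i => κ i + 1) β) *
        monicQ d N κ β x

/-- The kernel `E_k(x, y; κ) = Σ_{|γ|=k} (-x)_γ (-y)_γ / (γ! (κ+1)_γ)`. -/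
noncomputable def Efun (d : ℕ) (κ : Fin (d + 1) → ℝ) (x y : Fin (d + 1) → ℕ) (k : ℕ) : ℝ :=
  ∑ γ ∈ ZN d k,
    pochV (fun i => -(x i : ℝ)) γ * pochV (fun i => -(y i : ℝ)) γ /
      (mfact γ * pochV (fun i => κ i + 1) γ)

/-- Monic Jacobi polynomial on the simplex `R_α^κ(x)`. -/
noncomputable def jacobiR (d : ℕ) (κ : Fin (d + 1) → ℝ) (α : Fin (d + 1) → ℕ)
    (x : Fin d → ℝ) : ℝ :=
  (-1 : ℝ) ^ (∑ i, α i) * pochV (fun i => κ i + 1) α /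
      poch ((∑ i, κ i) + d + (∑ i, α i)) (∑ i, α i) *
    ∑ γ ∈ below α,
      pochV (fun i => -(α i : ℝ)) γ * poch ((∑ i, κ i) + d + (∑ i, α i)) (∑ i, γ i) /
          (pochV (fun i => κ i + 1) γ * mfact γ) *
        ∏ i, (Fin.snoc x (1 - ∑ i, x i) : Fin (d + 1) → ℝ) i ^ γ i

/-- One-variable Krawtchouk polynomial `K_n(x; p, M)`. -/
noncomputable def kraw1 (n : ℕ) (x p M : ℝ) : ℝ :=
  ∑ k ∈ Finset.range (n + 1),
    poch (-(n : ℝ)) k * poch (-x) k / (poch (-M) k * (Nat.factorial k : ℝ) * p ^ k)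

/-- The extended parameter `𝛒 = (ρ_1, …, ρ_d, 1 - |ρ|)`. -/
noncomputable def brho (d : ℕ) (ρ : Fin d → ℝ) : Fin (d + 1) → ℝ :=
  Fin.snoc ρ (1 - ∑ i, ρ i)

/-- `𝛒^γ = ∏ i 𝛒_i^{γ i}`. -/
noncomputable def bpow (d : ℕ) (ρ : Fin d → ℝ) (γ : Fin (d + 1) → ℕ) : ℝ :=
  ∏ i, brho d ρ i ^ γ i

/-- `|𝛒_j| = ρ_1 + ⋯ + ρ_j` (1-based `j`). -/
noncomputable def sumLe (d : ℕ) (ρ : Fin d → ℝ) (j : Fin d) : ℝ :=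
  ∑ i ∈ Finset.univ.filter (fun i : Fin d => (i : ℕ) ≤ (j : ℕ)), ρ i

/-- `|𝛒_{j-1}| = ρ_1 + ⋯ + ρ_{j-1}` (1-based `j`). -/
noncomputable def sumLtρ (d : ℕ) (ρ : Fin d → ℝ) (j : Fin d) : ℝ :=
  ∑ i ∈ Finset.univ.filter (fun i : Fin d => (i : ℕ) < (j : ℕ)), ρ i

/-- Krawtchouk polynomial of `d` variables `K_ν(x; ρ, N)`. -/
noncomputable def krawH (d N : ℕ) (ρ : Fin d → ℝ) (ν : Fin d → ℕ)
    (x : Fin (d + 1) → ℕ) : ℝ :=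
  (-1 : ℝ) ^ (∑ i, ν i) / poch (-(N : ℝ)) (∑ i, ν i) *
    ∏ j : Fin d,
      ρ j ^ ν j / (1 - sumLe d ρ j) ^ ν j *
        poch (-(N : ℝ) + sumLt d x j + sumGt d ν j) (ν j) *
        kraw1 (ν j) (x j.castSucc : ℝ) (ρ j / (1 - sumLtρ d ρ j))
          ((N : ℝ) - sumLt d x j - sumGt d ν j)

/-- Squared norm `C_ν(ρ, N)` of the Krawtchouk polynomial `K_ν(·; ρ, N)`. -/
noncomputable def Cnorm (d N : ℕ) (ρ : Fin d → ℝ) (ν : Fin d → ℕ) : ℝ :=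
  (-1 : ℝ) ^ (∑ i, ν i) / (poch (-(N : ℝ)) (∑ i, ν i) * (Nat.factorial N : ℝ)) *
    ∏ j : Fin d,
      (Nat.factorial (ν j) : ℝ) * ρ j ^ ν j /
        (1 - sumLe d ρ j) ^ ((ν j : ℤ) - ((Fin.snoc ν 0 : Fin (d + 1) → ℕ) j.succ : ℤ))

/-- Monic Krawtchouk polynomial `L_α(x; ρ, N)`. -/
noncomputable def monicL (d N : ℕ) (ρ : Fin d → ℝ) (α : Fin (d + 1) → ℕ)
    (x : Fin (d + 1) → ℝ) : ℝ :=
  poch (-(N : ℝ)) (∑ i, α i) * bpow d ρ α *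
    ∑ γ ∈ below α,
      pochV (fun i => -(α i : ℝ)) γ * (-1 : ℝ) ^ (∑ i, γ i) /
          (mfact γ * poch (-(N : ℝ)) (∑ i, γ i) * bpow d ρ γ) *
        mono γ x

/-- Projection `L_{α,n}(x; ρ, N)` of `m_α/𝛒^α` onto the space of degree `n`. -/
noncomputable def monicLn (d N : ℕ) (ρ : Fin d → ℝ) (α : Fin (d + 1) → ℕ) (n : ℕ)
    (x : Fin (d + 1) → ℝ) : ℝ :=
  (-1 : ℝ) ^ (∑ i, α i) * poch (-(N : ℝ)) (∑ i, α i) / poch (-(N : ℝ)) n *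
    ∑ β ∈ ZN d n,
      pochV (fun i => -(α i : ℝ)) β / (mfact β * bpow d ρ β) * monicL d N ρ β x

/-- The kernel `F_k(x, y; ρ) = Σ_{|γ|=k} (-x)_γ (-y)_γ / (γ! 𝛒^γ)`. -/
noncomputable def Ffun (d : ℕ) (ρ : Fin d → ℝ) (x y : Fin (d + 1) → ℕ) (k : ℕ) : ℝ :=
  ∑ γ ∈ ZN d k,
    pochV (fun i => -(x i : ℝ)) γ * pochV (fun i => -(y i : ℝ)) γ / (mfact γ * bpow d ρ γ)

/-! `(-γ)_α` vanishes unless `α ≤ γ`, and on `α ≤ γ` the factor `N!/γ! · (-γ)_α` equals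
`(-1)^{|α|} N!/(γ-α)!`. Substituting `γ = α + δ` with `|δ| = N - |α|` leaves
`(-N)_{|α|} y^α` times the multinomial expansion of `(y_1 + ⋯ + y_{d+1})^{N-|α|}`. -/

lemma poch_eq_eval_ascPochhammer (a : ℝ) (k : ℕ) : poch a k = (ascPochhammer ℝ k).eval a := by
  induction k with
  | zero => simp [poch]
  | succ k ih => rw [poch, ih, ascPochhammer_succ_eval]

lemma poch_neg_natCast (n k : ℕ) : poch (-(n : ℝ)) k = (-1) ^ k * n.descFactorial k := by
  rw [poch_eq_eval_ascPochhammer, ascPochhammer_eval_neg_eq_descPochhammer,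
    descPochhammer_eval_eq_descFactorial]

lemma pochV_neg_natCast {m : ℕ} (γ α : Fin m → ℕ) :
    pochV (fun i => -(γ i : ℝ)) α = (-1) ^ (∑ i, α i) * ∏ i, ((γ i).descFactorial (α i) : ℝ) := by
  simp only [pochV, poch_neg_natCast, prod_mul_distrib, prod_pow_eq_pow_sum]

lemma pochV_neg_natCast_eq_zero {m : ℕ} {γ α : Fin m → ℕ} (h : ¬α ≤ γ) :
    pochV (fun i => -(γ i : ℝ)) α = 0 := by
  obtain ⟨i, hi⟩ : ∃ i, ¬α i ≤ γ i := by simpa [Pi.le_def] using h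
  rw [pochV_neg_natCast, prod_eq_zero (mem_univ i)]
  · ring
  · simp [Nat.descFactorial_eq_zero_iff_lt.mpr (not_le.mp hi)]

lemma mfact_add {m : ℕ} (α δ : Fin m → ℕ) :
    mfact (α + δ) = mfact δ * ∏ i, ((α i + δ i).descFactorial (α i) : ℝ) := by
  simp only [mfact, ← prod_mul_distrib, ← Nat.cast_mul, Pi.add_apply]
  refine prod_congr rfl fun i _ => ?_
  rw [← Nat.factorial_mul_descFactorial (Nat.le_add_right (α i) (δ i)), Nat.add_sub_cancel_left]

lemma mem_ZN {d n : ℕ} {γ : Fin (d + 1) → ℕ} : γ ∈ ZN d n ↔ ∑ i, γ i = n := by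
  simp only [ZN, mem_filter, Fintype.mem_piFinset, mem_range, Nat.lt_succ_iff,
    and_iff_right_iff_imp]
  rintro rfl i
  exact single_le_sum (fun j _ => Nat.zero_le (γ j)) (mem_univ i)

lemma ZN_eq_piAntidiag (d n : ℕ) : ZN d n = piAntidiag univ n := by
  ext γ
  simp [mem_ZN, mem_piAntidiag]

lemma sum_pow_eq_sum_ZN (d n : ℕ) (y : Fin (d + 1) → ℝ) :
    (∑ i, y i) ^ n = ∑ δ ∈ ZN d n, (n.factorial : ℝ) / mfact δ * ∏ i, y i ^ δ i := by
  rw [ZN_eq_piAntidiag, sum_pow_eq_sum_piAntidiag]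
  refine sum_congr rfl fun δ hδ => ?_
  have hspec := Nat.multinomial_spec univ δ
  rw [(mem_piAntidiag.mp hδ).1] at hspec
  congr 1
  rw [eq_div_iff (prod_pos fun i _ => by positivity).ne', mfact, ← hspec]
  push_cast
  ring

lemma sum_ZN_eq_sum_ZN_add {d N : ℕ} (α : Fin (d + 1) → ℕ) (hα : ∑ i, α i ≤ N)
    (f : (Fin (d + 1) → ℕ) → ℝ) (hf : ∀ γ, ¬α ≤ γ → f γ = 0) :
    ∑ γ ∈ ZN d N, f γ = ∑ δ ∈ ZN d (N - ∑ i, α i), f (α + δ) := by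
  have hmap := sum_map (ZN d (N - ∑ i, α i)) (addLeftEmbedding α) f
  simp only [addLeftEmbedding_apply] at hmap
  rw [← hmap]
  refine (sum_subset (fun γ hγ => ?_) fun γ hγN hγ => hf γ fun hle => hγ ?_).symm
  · obtain ⟨δ, hδ, rfl⟩ := mem_map.mp hγ
    rw [mem_ZN] at hδ ⊢
    simp only [addLeftEmbedding_apply, Pi.add_apply, sum_add_distrib]
    omega
  · refine mem_map.mpr ⟨γ - α, ?_, add_tsub_cancel_of_le hle⟩
    have hsum : ∑ i, (γ i - α i) + ∑ i, α i = ∑ i, γ i := by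
      rw [← sum_add_distrib]
      exact sum_congr rfl fun i _ => Nat.sub_add_cancel (hle i)
    rw [mem_ZN] at hγN ⊢
    simp only [Pi.sub_apply]
    omega

theorem sum_monomial_pochhammer_general (d N : ℕ) (y : Fin (d + 1) → ℝ)
    (α : Fin (d + 1) → ℕ) (hα : ∑ i, α i ≤ N) :
    ∑ γ ∈ ZN d N,
        (Nat.factorial N : ℝ) / mfact γ * pochV (fun i => -(γ i : ℝ)) α * ∏ i, y i ^ γ i =
      poch (-(N : ℝ)) (∑ i, α i) * (∑ i, y i) ^ (N - ∑ i, α i) * ∏ i, y i ^ α i := by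
  set M := N - ∑ i, α i
  have hfact : (N.factorial : ℝ) = N.descFactorial (∑ i, α i) * M.factorial := by
    rw [← Nat.factorial_mul_descFactorial hα]
    push_cast
    ring
  rw [sum_ZN_eq_sum_ZN_add α hα _ fun γ h => by rw [pochV_neg_natCast_eq_zero h]; ring,
    sum_pow_eq_sum_ZN, mul_sum, sum_mul]
  refine sum_congr rfl fun δ _ => ?_
  have hdesc : (∏ i, ((α i + δ i).descFactorial (α i) : ℝ)) ≠ 0 :=
    prod_ne_zero_iff.mpr fun i _ => by simp [Nat.descFactorial_eq_zero_iff_lt]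
  rw [mfact_add, pochV_neg_natCast, poch_neg_natCast, hfact]
  simp only [Pi.add_apply, pow_add, prod_mul_distrib]
  field_simp

/-- `Σ_{|γ|=N} (N!/γ!) (-γ)_α y^γ = (-N)_{|α|} |y|^{N-|α|} y^α`. -/
theorem sum_monomial_pochhammer (d N : ℕ) (hd : 1 ≤ d) (y : Fin (d + 1) → ℝ)
    (α : Fin (d + 1) → ℕ) (hα : ∑ i, α i ≤ N) :
    ∑ γ ∈ ZN d N,
        (Nat.factorial N : ℝ) / mfact γ * pochV (fun i => -(γ i : ℝ)) α * ∏ i, y i ^ γ i =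
      poch (-(N : ℝ)) (∑ i, α i) * (∑ i, y i) ^ (N - ∑ i, α i) * ∏ i, y i ^ α i :=
  sum_monomial_pochhammer_general d N y α hα
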